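/- Let H be a compact quantum group with normal integral φ and inner product ⟨x,y⟩ = φ(S(y∘)x). For any linear functional τ on H, the adjoint of the convolution operator id ⋆ τ is id ⋆ (conj(τ) ∘ ∘), and the adjoint of τ ⋆ id is (conj(τ) ∘ S² ∘ ∘) ⋆ id. -/

import Mathlib

open TensorProduct Coalgebra HopfAlgebra

variable {H : Type*} [Ring H] [HopfAlgebra ℂ H]

/-- `φ` is a right integral: `Σ φ(x₁) x₂ = φ(x) 1`. -/
def IsRightIntegral (φ : H →ₗ[ℂ] ℂ) : Prop :=
  ∀ x : H,
    TensorProduct.lid ℂ H ((LinearMap.rTensor H φ) (Coalgebra.comul (R := ℂ) x)) = φ x • 1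

/-- `φ` is a left integral: `Σ x₁ φ(x₂) = φ(x) 1`. -/
def IsLeftIntegral (φ : H →ₗ[ℂ] ℂ) : Prop :=
  ∀ x : H,
    TensorProduct.rid ℂ H ((LinearMap.lTensor H φ) (Coalgebra.comul (R := ℂ) x)) = φ x • 1

/-- The sesquilinear form `⟨x, y⟩ = φ(S(y∘) x)` attached to the integral `φ`. -/
noncomputable def intInner (circ : H → H) (φ : H →ₗ[ℂ] ℂ) (x y : H) : ℂ :=
  φ (antipode (R := ℂ) (circ y) * x)

/-!
For a right integral `φ`, applying the integral property to `S(a₂) x`, whose coproduct is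
`Σ S(a₃) x₁ ⊗ S(a₂) x₂` because `S` is an anti-coalgebra map, and collapsing `a₁ S(a₂)` gives
`Σ φ(S a · x₁) x₂ = Σ φ(S a₂ · x) a₁`; for a left integral one gets in the same way
`Σ φ(S a · x₂) x₁ = Σ φ(S a₁ · x) S² a₂`, now collapsing `S²(a₂) S(a₁) = S(a₁ S a₂)`.
With `a = y∘`, whose coproduct is `Σ y₂∘ ⊗ y₁∘`, these read `Σ ⟨x₁, y⟩ x₂ = Σ ⟨x, y₁⟩ y₂∘` and
`Σ ⟨x₂, y⟩ x₁ = Σ ⟨x, y₂⟩ S²(y₁∘)`; applying `τ` and using sesquilinearity of `⟨·, ·⟩` gives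
the two adjoint formulas.
-/

open WithConv ComplexConjugate

universe w

lemma Coalgebra.sum_counit_right_smul {R A ι : Type*} [CommSemiring R] [AddCommMonoid A]
    [Module R A] [Coalgebra R A] {a : A} (r : Repr R a ι) :
    ∑ i ∈ r.index, counit (R := R) (r.right i) • r.left i = a := by
  simpa only [map_sum, _root_.TensorProduct.rid_tmul, one_smul] using
    congr(_root_.TensorProduct.rid R A $(sum_tmul_counit_eq r))

/-- Lets a hypothesis about representations indexed in one fixed universe be applied to
representations indexed in any universe. -/
noncomputable def Coalgebra.Repr.toULiftFin {R A : Type*} [CommSemiring R] [AddCommMonoid A]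
    [Module R A] [CoalgebraStruct R A] {ι : Type*} {a : A} (r : Repr R a ι) :
    Repr R a (ULift.{w} (Fin r.index.card)) where
  index := Finset.univ
  left i := r.left (r.index.equivFin.symm i.down)
  right i := r.right (r.index.equivFin.symm i.down)
  eq := by
    rw [← r.eq, ← Finset.sum_attach r.index]
    exact Fintype.sum_equiv (Equiv.ulift.trans r.index.equivFin.symm) _ _ fun _ ↦ rfl

lemma Coalgebra.Repr.sum_toULiftFin {R A M : Type*} [CommSemiring R] [AddCommMonoid A]
    [Module R A] [CoalgebraStruct R A] [AddCommMonoid M] {ι : Type*} {a : A} (r : Repr R a ι)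
    (f : A → A → M) :
    ∑ i ∈ (r.toULiftFin.{w}).index, f (r.toULiftFin.left i) (r.toULiftFin.right i) =
      ∑ i ∈ r.index, f (r.left i) (r.right i) := by
  rw [← Finset.sum_attach r.index]
  exact Fintype.sum_equiv (Equiv.ulift.trans r.index.equivFin.symm) _ _ fun _ ↦ rfl

namespace HopfAlgebra

variable {R A : Type*} [CommSemiring R] [Semiring A] [HopfAlgebra R A]

lemma sum_antipode_antipode_mul_antipode {ι : Type*} {a : A} (r : Repr R a ι) :
    ∑ i ∈ r.index, antipode R (antipode R (r.right i)) * antipode R (r.left i) =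
      counit (R := R) a • 1 := by
  simp_rw [← antipode_mul_antidistrib, ← map_sum, sum_mul_antipode_eq_smul, map_smul, antipode_one]

lemma sum_one_tmul_mul_map_antipode_comm_comul {ι : Type*} {a : A} (r : Repr R a ι) :
    ∑ i ∈ r.index, (1 ⊗ₜ[R] r.left i) *
      map (antipode R) (antipode R) (TensorProduct.comm R A A (comul (r.right i))) =
      antipode R a ⊗ₜ 1 := by
  let Ψ : A ⊗[R] (A ⊗[R] A) →ₗ[R] A ⊗[R] A :=
    (TensorProduct.comm R A A).toLinearMap ∘ₗ
      map (LinearMap.mul' R A ∘ₗ LinearMap.lTensor A (antipode R)) (antipode R) ∘ₗ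
      (TensorProduct.assoc R A A A).symm.toLinearMap
  have hΨ (u v w : A) : Ψ (u ⊗ₜ (v ⊗ₜ w)) = antipode R w ⊗ₜ (u * antipode R v) := by simp [Ψ]
  have h := congr(Ψ $(sum_tmul_tmul_eq r (fun i ↦ ℛ R (r.left i)) (fun i ↦ ℛ R (r.right i))))
  simp only [map_sum, hΨ] at h
  calc _ = ∑ i ∈ r.index, ∑ k ∈ (ℛ R (r.right i)).index, antipode R ((ℛ R (r.right i)).right k) ⊗ₜ
          (r.left i * antipode R ((ℛ R (r.right i)).left k)) := by
        refine Finset.sum_congr rfl fun i _ ↦ ?_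
        simp [← (ℛ R (r.right i)).eq, Finset.mul_sum, Algebra.TensorProduct.tmul_mul_tmul]
    _ = ∑ i ∈ r.index, antipode R (r.right i) ⊗ₜ (counit (R := R) (r.left i) • (1 : A)) := by
        rw [← h]
        exact Finset.sum_congr rfl fun i _ ↦ by rw [← tmul_sum, sum_mul_antipode_eq_smul]
    _ = _ := by simp only [← smul_tmul, ← sum_tmul, ← map_smul, ← map_sum, sum_counit_smul]

lemma comul_convMul_map_antipode_comm_comul :
    toConv (comul (R := R) (A := A)) *
      toConv (map (antipode R) (antipode R) ∘ₗ (TensorProduct.comm R A A).toLinearMap ∘ₗ comul) =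
      1 := by
  ext a
  set G : A →ₗ[R] A ⊗[R] A :=
    map (antipode R) (antipode R) ∘ₗ (TensorProduct.comm R A A).toLinearMap ∘ₗ comul
  let r := ℛ R a
  let Φ : A ⊗[R] (A ⊗[R] A) →ₗ[R] A ⊗[R] A :=
    LinearMap.mul' R (A ⊗[R] A) ∘ₗ map LinearMap.id G ∘ₗ
      (TensorProduct.assoc R A A A).symm.toLinearMap
  have hΦ (p q s : A) : Φ (p ⊗ₜ (q ⊗ₜ s)) = (p ⊗ₜ q) * G s := by simp [Φ]
  have h := congr(Φ $(sum_tmul_tmul_eq r (fun i ↦ ℛ R (r.left i)) (fun i ↦ ℛ R (r.right i))))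
  simp only [map_sum, hΦ] at h
  rw [r.convMul_apply, LinearMap.convOne_apply]
  calc _ = ∑ i ∈ r.index, ∑ k ∈ (ℛ R (r.right i)).index,
          (r.left i ⊗ₜ (ℛ R (r.right i)).left k) * G ((ℛ R (r.right i)).right k) := by
        rw [← h]
        exact Finset.sum_congr rfl fun i _ ↦ by simp [← (ℛ R (r.left i)).eq, Finset.sum_mul]
    _ = ∑ i ∈ r.index, (r.left i ⊗ₜ[R] (1 : A)) * (antipode R (r.right i) ⊗ₜ 1) := by
        refine Finset.sum_congr rfl fun i _ ↦ ?_
        rw [← sum_one_tmul_mul_map_antipode_comm_comul (ℛ R (r.right i)), Finset.mul_sum]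
        simp [G, ← mul_assoc, Algebra.TensorProduct.tmul_mul_tmul]
    _ = _ := by
        simp [Algebra.TensorProduct.tmul_mul_tmul, ← sum_tmul, sum_mul_antipode_eq_smul,
          Algebra.algebraMap_eq_smul_one, smul_tmul', Algebra.TensorProduct.one_def]

lemma comul_comp_antipode_convMul_comul :
    toConv (comul ∘ₗ antipode R) * toConv comul = (1 : WithConv (A →ₗ[R] A ⊗[R] A)) := by
  ext a
  simp [(ℛ R a).convMul_apply, ← Bialgebra.comul_mul, ← map_sum, sum_antipode_mul_eq_smul,
    Algebra.algebraMap_eq_smul_one, smul_tmul', Algebra.TensorProduct.one_def]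

/-- Both sides are convolution inverses of `Δ`, the left one from the left and the right one
from the right. -/
lemma comul_antipode (a : A) :
    comul (R := R) (antipode R a) =
      map (antipode R) (antipode R) (TensorProduct.comm R A A (comul a)) := by
  have := left_inv_eq_right_inv (comul_comp_antipode_convMul_comul (R := R) (A := A))
    comul_convMul_map_antipode_comm_comul
  exact congr($this a)

def _root_.Coalgebra.Repr.antipode {ι : Type*} {a : A} (r : Repr R a ι) :
    Repr R (HopfAlgebra.antipode R a) ι where
  index := r.index
  left i := HopfAlgebra.antipode R (r.right i)
  right i := HopfAlgebra.antipode R (r.left i)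
  eq := by simp [comul_antipode, ← r.eq]

lemma sum_mul_antipode_mul_apply {ι : Type*} {κ : ι → Type*} {a : A} (r : Repr R a ι)
    (s : (i : ι) → Repr R (r.right i) (κ i)) (f : A →ₗ[R] A) :
    ∑ i ∈ r.index, ∑ k ∈ (s i).index, r.left i * antipode R ((s i).left k) * f ((s i).right k) =
      f a := by
  let Ψ : A ⊗[R] (A ⊗[R] A) →ₗ[R] A :=
    LinearMap.mul' R A ∘ₗ map (LinearMap.mul' R A ∘ₗ LinearMap.lTensor A (antipode R)) f ∘ₗ
      (TensorProduct.assoc R A A A).symm.toLinearMap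
  have hΨ (u v w : A) : Ψ (u ⊗ₜ (v ⊗ₜ w)) = u * antipode R v * f w := by simp [Ψ]
  have h := congr(Ψ $(sum_tmul_tmul_eq r (fun i ↦ ℛ R (r.left i)) s))
  simp only [map_sum, hΨ] at h
  rw [← h]
  simp_rw [← Finset.sum_mul, sum_mul_antipode_eq_smul, smul_mul_assoc, one_mul, ← map_smul,
    ← map_sum, sum_counit_smul]

lemma sum_antipode_antipode_mul_antipode_mul_apply {ι : Type*} {κ : ι → Type*} {a : A}
    (r : Repr R a ι) (s : (i : ι) → Repr R (r.left i) (κ i)) (f : A →ₗ[R] A) :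
    ∑ i ∈ r.index, ∑ k ∈ (s i).index,
      antipode R (antipode R (r.right i)) * antipode R ((s i).right k) * f ((s i).left k) =
      f a := by
  let Ψ : A ⊗[R] (A ⊗[R] A) →ₗ[R] A :=
    LinearMap.mul' R A ∘ₗ (TensorProduct.comm R A A).toLinearMap ∘ₗ
      map f (LinearMap.mul' R A ∘ₗ (TensorProduct.comm R A A).toLinearMap ∘ₗ
        map (antipode R) (antipode R ∘ₗ antipode R))
  have hΨ (u v w : A) : Ψ (u ⊗ₜ (v ⊗ₜ w)) =
      antipode R (antipode R w) * antipode R v * f u := by simp [Ψ, mul_assoc]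
  have h := congr(Ψ $(sum_tmul_tmul_eq r s (fun i ↦ ℛ R (r.right i))))
  simp only [map_sum, hΨ] at h
  rw [h]
  simp_rw [← Finset.sum_mul, sum_antipode_antipode_mul_antipode, smul_mul_assoc, one_mul,
    ← map_smul, ← map_sum, Coalgebra.sum_counit_right_smul]

end HopfAlgebra

section Integral

variable {φ : H →ₗ[ℂ] ℂ} {ι κ : Type*}

lemma IsRightIntegral.sum_smul (hφ : IsRightIntegral φ) {z : H} (r : Repr ℂ z ι) :
    ∑ i ∈ r.index, φ (r.left i) • r.right i = φ z • 1 := by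
  simpa [← r.eq, map_sum] using hφ z

lemma IsLeftIntegral.sum_smul (hφ : IsLeftIntegral φ) {z : H} (r : Repr ℂ z ι) :
    ∑ i ∈ r.index, φ (r.right i) • r.left i = φ z • 1 := by
  simpa [← r.eq, map_sum] using hφ z

lemma IsRightIntegral.sum_smul_antipode_mul (hφ : IsRightIntegral φ) {w x : H}
    (rw : Repr ℂ w ι) (rx : Repr ℂ x κ) :
    ∑ k ∈ rw.index, ∑ i ∈ rx.index,
      φ (antipode ℂ (rw.right k) * rx.left i) • (antipode ℂ (rw.left k) * rx.right i) =
      φ (antipode ℂ w * x) • 1 := by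
  simpa [Finset.sum_product, Repr.antipode] using hφ.sum_smul (rw.antipode.mul rx)

lemma IsLeftIntegral.sum_smul_antipode_mul (hφ : IsLeftIntegral φ) {w x : H}
    (rw : Repr ℂ w ι) (rx : Repr ℂ x κ) :
    ∑ k ∈ rw.index, ∑ i ∈ rx.index,
      φ (antipode ℂ (rw.left k) * rx.right i) • (antipode ℂ (rw.right k) * rx.left i) =
      φ (antipode ℂ w * x) • 1 := by
  simpa [Finset.sum_product, Repr.antipode] using hφ.sum_smul (rw.antipode.mul rx)

lemma IsRightIntegral.sum_apply_antipode_mul_smul (hφ : IsRightIntegral φ) {a x : H}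
    (ra : Repr ℂ a ι) (rx : Repr ℂ x κ) :
    ∑ i ∈ rx.index, φ (antipode ℂ a * rx.left i) • rx.right i =
      ∑ j ∈ ra.index, φ (antipode ℂ (ra.right j) * x) • ra.left j := by
  let L : H →ₗ[ℂ] H :=
    ∑ i ∈ rx.index, (φ ∘ₗ LinearMap.mulRight ℂ (rx.left i) ∘ₗ antipode ℂ).smulRight (rx.right i)
  have hL (s : H) : L s = ∑ i ∈ rx.index, φ (antipode ℂ s * rx.left i) • rx.right i := by
    simp [L, LinearMap.sum_apply]
  calc _ = L a := (hL a).symm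
    _ = ∑ j ∈ ra.index, ∑ k ∈ (ℛ ℂ (ra.right j)).index,
          ra.left j * antipode ℂ ((ℛ ℂ (ra.right j)).left k) * L ((ℛ ℂ (ra.right j)).right k) :=
        (sum_mul_antipode_mul_apply ra _ L).symm
    _ = _ := by
        refine Finset.sum_congr rfl fun j _ ↦ ?_
        have h := congr(ra.left j * $(hφ.sum_smul_antipode_mul (ℛ ℂ (ra.right j)) rx))
        rw [mul_smul_comm, mul_one] at h
        simp [← h, hL, Finset.mul_sum, mul_assoc]

lemma IsLeftIntegral.sum_apply_antipode_mul_smul (hφ : IsLeftIntegral φ) {a x : H}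
    (ra : Repr ℂ a ι) (rx : Repr ℂ x κ) :
    ∑ i ∈ rx.index, φ (antipode ℂ a * rx.right i) • rx.left i =
      ∑ j ∈ ra.index, φ (antipode ℂ (ra.left j) * x) • antipode ℂ (antipode ℂ (ra.right j)) := by
  let L : H →ₗ[ℂ] H :=
    ∑ i ∈ rx.index, (φ ∘ₗ LinearMap.mulRight ℂ (rx.right i) ∘ₗ antipode ℂ).smulRight (rx.left i)
  have hL (s : H) : L s = ∑ i ∈ rx.index, φ (antipode ℂ s * rx.right i) • rx.left i := by
    simp [L, LinearMap.sum_apply]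
  calc _ = L a := (hL a).symm
    _ = ∑ j ∈ ra.index, ∑ k ∈ (ℛ ℂ (ra.left j)).index,
          antipode ℂ (antipode ℂ (ra.right j)) * antipode ℂ ((ℛ ℂ (ra.left j)).right k) *
            L ((ℛ ℂ (ra.left j)).left k) :=
        (sum_antipode_antipode_mul_antipode_mul_apply ra _ L).symm
    _ = _ := by
        refine Finset.sum_congr rfl fun j _ ↦ ?_
        have h := congr(antipode ℂ (antipode ℂ (ra.right j)) *
          $(hφ.sum_smul_antipode_mul (ℛ ℂ (ra.left j)) rx))
        rw [mul_smul_comm, mul_one] at h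
        simp [← h, hL, Finset.mul_sum, mul_assoc]

end Integral

section InnerProduct

variable {ι κ : Type*}

lemma intInner_sum_smul_left (circ : H → H) (φ : H →ₗ[ℂ] ℂ) (s : Finset ι) (c : ι → ℂ)
    (x : ι → H) (y : H) :
    intInner circ φ (∑ i ∈ s, c i • x i) y = ∑ i ∈ s, c i * intInner circ φ (x i) y := by
  simp [intInner, Finset.mul_sum, map_sum]

lemma intInner_sum_smul_right (circ : H →ₗ⋆[ℂ] H) (φ : H →ₗ[ℂ] ℂ) (x : H) (s : Finset κ)
    (c : κ → ℂ) (y : κ → H) :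
    intInner circ φ x (∑ j ∈ s, c j • y j) = ∑ j ∈ s, conj (c j) * intInner circ φ x (y j) := by
  simp [intInner, Finset.sum_mul, map_sum]

lemma intInner_sum_smul_eq_of_sum_intInner_smul (circ : H →ₗ⋆[ℂ] H) (φ τ : H →ₗ[ℂ] ℂ)
    {x y : H} {s : Finset ι} {t : Finset κ} {u u' : ι → H} {v v' : κ → H}
    (h : ∑ i ∈ s, intInner circ φ (u i) y • u' i = ∑ j ∈ t, intInner circ φ x (v j) • v' j) :
    intInner circ φ (∑ i ∈ s, τ (u' i) • u i) y =
      intInner circ φ x (∑ j ∈ t, conj (τ (v' j)) • v j) := by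
  rw [intInner_sum_smul_left, intInner_sum_smul_right]
  simpa [map_sum, mul_comm] using congr(τ $h)

end InnerProduct

theorem convolution_adjoints_general
    (circ : H → H)
    (hcadd : ∀ x y : H, circ (x + y) = circ x + circ y)
    (hcsmul : ∀ (a : ℂ) (x : H), circ (a • x) = (starRingEnd ℂ) a • circ x)
    (hcanti : ∀ {ι : Type*} (x : H) (r : Coalgebra.Repr ℂ x ι),
      Coalgebra.comul (R := ℂ) (circ x) =
        ∑ i ∈ r.index, circ (r.right i) ⊗ₜ[ℂ] circ (r.left i))
    (φ : H →ₗ[ℂ] ℂ) (hr : IsRightIntegral φ) (hl : IsLeftIntegral φ)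
    (τ : H →ₗ[ℂ] ℂ) :
    ∀ {ι κ : Type*} (x y : H) (rx : Coalgebra.Repr ℂ x ι) (ry : Coalgebra.Repr ℂ y κ),
      (intInner circ φ (∑ i ∈ rx.index, τ (rx.right i) • rx.left i) y =
        intInner circ φ x
          (∑ j ∈ ry.index, (starRingEnd ℂ) (τ (circ (ry.right j))) • ry.left j)) ∧
      (intInner circ φ (∑ i ∈ rx.index, τ (rx.left i) • rx.right i) y =
        intInner circ φ x
          (∑ j ∈ ry.index,
            (starRingEnd ℂ)
              (τ (antipode (R := ℂ) (antipode (R := ℂ) (circ (ry.left j))))) •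
              ry.right j)) := by
  intro ι κ x y rx ry
  let c : H →ₗ⋆[ℂ] H := { toFun := circ, map_add' := hcadd, map_smul' := hcsmul }
  let rcy : Repr ℂ (circ y) κ :=
    { index := ry.index
      left j := circ (ry.right j)
      right j := circ (ry.left j)
      eq := ((hcanti y ry.toULiftFin).trans (ry.sum_toULiftFin fun l r ↦ circ r ⊗ₜ circ l)).symm }
  exact ⟨intInner_sum_smul_eq_of_sum_intInner_smul c φ τ (hr.sum_apply_antipode_mul_smul rcy rx),
    intInner_sum_smul_eq_of_sum_intInner_smul c φ τ (hl.sum_apply_antipode_mul_smul rcy rx)⟩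

/-- for a compact quantum group and any `τ ∈ H*`, the adjoint of
`id ⋆ τ` is `id ⋆ (conj τ ∘ ∘)`, and the adjoint of `τ ⋆ id` is
`(conj τ ∘ S² ∘ ∘) ⋆ id` (expressed in Sweedler notation). -/
theorem convolution_adjoints
    (circ : H → H)
    (hcadd : ∀ x y : H, circ (x + y) = circ x + circ y)
    (hcsmul : ∀ (a : ℂ) (x : H), circ (a • x) = (starRingEnd ℂ) a • circ x)
    (hcinvol : ∀ x : H, circ (circ x) = x)
    (hcanti : ∀ {ι : Type*} (x : H) (r : Coalgebra.Repr ℂ x ι),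
      Coalgebra.comul (R := ℂ) (circ x) =
        ∑ i ∈ r.index, circ (r.right i) ⊗ₜ[ℂ] circ (r.left i))
    (hcmul : ∀ x y : H, circ (x * y) = circ x * circ y)
    (φ : H →ₗ[ℂ] ℂ) (hr : IsRightIntegral φ) (hl : IsLeftIntegral φ) (hn : φ 1 = 1)
    (hherm : ∀ x y : H, intInner circ φ y x = (starRingEnd ℂ) (intInner circ φ x y))
    (hpos : ∀ x : H, x ≠ 0 →
      0 < (intInner circ φ x x).re ∧ (intInner circ φ x x).im = 0)
    (τ : H →ₗ[ℂ] ℂ) :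
    ∀ {ι κ : Type*} (x y : H) (rx : Coalgebra.Repr ℂ x ι) (ry : Coalgebra.Repr ℂ y κ),
      (intInner circ φ (∑ i ∈ rx.index, τ (rx.right i) • rx.left i) y =
        intInner circ φ x
          (∑ j ∈ ry.index, (starRingEnd ℂ) (τ (circ (ry.right j))) • ry.left j)) ∧
      (intInner circ φ (∑ i ∈ rx.index, τ (rx.left i) • rx.right i) y =
        intInner circ φ x
          (∑ j ∈ ry.index,
            (starRingEnd ℂ)
              (τ (antipode (R := ℂ) (antipode (R := ℂ) (circ (ry.left j))))) •
              ry.right j)) :=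
  convolution_adjoints_general circ hcadd hcsmul hcanti φ hr hl τ
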